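/- arXiv:math/0003023 — 8 statements merged into one kernel-verified Lean document; each statement's English description precedes it below -/
import Mathlib

section
/- The Koszul bracket of one-forms associated to a Poisson bivector satisfies the Jacobi identity. In local coordinates, for one-forms β = β_i dx^i, γ = γ_i dx^i the bracket is [β,γ]_i = ∂_i α^{jk} β_j γ_k + α^{jk} ∂_j β_i γ_k + α^{jk} β_j ∂_k γ_i, and this bracket satisfies the Jacobi identity whenever α satisfies the Poisson Jacobi identity. -/
open scoped BigOperators

/-- Partial derivative in the `i`-th coordinate direction. -/
noncomputable def pd {n : ℕ} (f : (Fin n → ℝ) → ℝ) (i : Fin n) (x : Fin n → ℝ) : ℝ :=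
  fderiv ℝ f x (Pi.single i 1)

/-- Koszul bracket of one-forms (in coordinates) associated to a bivector `α`. -/
noncomputable def koszul {n : ℕ} (α : (Fin n → ℝ) → Fin n → Fin n → ℝ)
    (β γ : (Fin n → ℝ) → Fin n → ℝ) : (Fin n → ℝ) → Fin n → ℝ :=
  fun x i =>
    (∑ j, ∑ k, pd (fun y => α y j k) i x * β x j * γ x k)
      + (∑ j, ∑ k, α x j k * pd (fun y => β y i) j x * γ x k)
      + (∑ j, ∑ k, α x j k * β x j * pd (fun y => γ y i) k x)

namespace KoszulAux


variable {n : ℕ}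

lemma pd_congr {f g : (Fin n → ℝ) → ℝ} {x : Fin n → ℝ} (h : f =ᶠ[nhds x] g) (i : Fin n) :
    pd f i x = pd g i x := by
  unfold pd; rw [Filter.EventuallyEq.fderiv_eq h]

lemma pd_add {f g : (Fin n → ℝ) → ℝ} {x : Fin n → ℝ}
    (hf : DifferentiableAt ℝ f x) (hg : DifferentiableAt ℝ g x) (i : Fin n) :
    pd (fun y => f y + g y) i x = pd f i x + pd g i x := by
  unfold pd; rw [fderiv_fun_add hf hg]; simp

lemma pd_neg {f : (Fin n → ℝ) → ℝ} {x : Fin n → ℝ} (i : Fin n) :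
    pd (fun y => -f y) i x = - pd f i x := by
  unfold pd; rw [fderiv_fun_neg]; simp

lemma pd_mul {f g : (Fin n → ℝ) → ℝ} {x : Fin n → ℝ}
    (hf : DifferentiableAt ℝ f x) (hg : DifferentiableAt ℝ g x) (i : Fin n) :
    pd (fun y => f y * g y) i x = pd f i x * g x + f x * pd g i x := by
  unfold pd; rw [fderiv_fun_mul hf hg]; simp; ring

lemma pd_mul3 {f g h : (Fin n → ℝ) → ℝ} {x : Fin n → ℝ}
    (hf : DifferentiableAt ℝ f x) (hg : DifferentiableAt ℝ g x) (hh : DifferentiableAt ℝ h x)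
    (i : Fin n) :
    pd (fun y => f y * g y * h y) i x
      = pd f i x * g x * h x + f x * pd g i x * h x + f x * g x * pd h i x := by
  rw [pd_mul (f := fun y => f y * g y) (hf.mul hg) hh, pd_mul hf hg]; ring

lemma pd_sum {ι : Type*} (s : Finset ι) {f : ι → (Fin n → ℝ) → ℝ} {x : Fin n → ℝ}
    (hf : ∀ j ∈ s, DifferentiableAt ℝ (f j) x) (i : Fin n) :
    pd (fun y => ∑ j ∈ s, f j y) i x = ∑ j ∈ s, pd (f j) i x := by
  unfold pd
  rw [fderiv_fun_sum hf]; simp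

lemma pd_zero {x : Fin n → ℝ} (i : Fin n) : pd (fun _ => (0:ℝ)) i x = 0 := by
  unfold pd; simp

lemma contDiffAt_pd {f : (Fin n → ℝ) → ℝ} {x : Fin n → ℝ}
    (hf : ContDiffAt ℝ (⊤ : ℕ∞) f x) (i : Fin n) :
    ContDiffAt ℝ (⊤ : ℕ∞) (fun y => pd f i y) x := by
  have h1 : ContDiffAt ℝ (⊤ : ℕ∞) (fderiv ℝ f) x := hf.fderiv_right (m := (⊤ : ℕ∞)) (by simp)
  exact (ContinuousLinearMap.apply ℝ ℝ (Pi.single i 1)).contDiff.contDiffAt.comp x h1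

lemma pd_comm {f : (Fin n → ℝ) → ℝ} {x : Fin n → ℝ}
    (hf : ContDiffAt ℝ (⊤ : ℕ∞) f x) (i j : Fin n) :
    pd (fun y => pd f i y) j x = pd (fun y => pd f j y) i x := by
  have hd : DifferentiableAt ℝ (fderiv ℝ f) x :=
    (hf.fderiv_right (m := (⊤ : ℕ∞)) (by simp)).differentiableAt (by simp)
  have key : ∀ v w : Fin n → ℝ,
      fderiv ℝ (fun y => fderiv ℝ f y v) x w = fderiv ℝ (fderiv ℝ f) x w v := by
    intro v w
    have := fderiv_clm_apply (c := fderiv ℝ f) (u := fun _ => v) hd (differentiableAt_const v)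
    rw [show (fun y => fderiv ℝ f y v) = (fun y => (fderiv ℝ f y) ((fun _ => v) y)) from rfl, this]
    simp
  have hsymm : IsSymmSndFDerivAt ℝ f x := hf.isSymmSndFDerivAt (by rw [minSmoothness_of_isRCLikeNormedField]; exact WithTop.coe_le_coe.mpr le_top)
  unfold pd
  rw [key, key, hsymm]


variable {n : ℕ}

def S4 (f : Fin n → Fin n → Fin n → Fin n → ℝ) : ℝ := ∑ j, ∑ k, ∑ l, ∑ m, f j k l m

lemma S4_eq_sum (f : Fin n → Fin n → Fin n → Fin n → ℝ) :
    S4 f = ∑ p : Fin n × Fin n × Fin n × Fin n, f p.1 p.2.1 p.2.2.1 p.2.2.2 := by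
  simp [S4, Fintype.sum_prod_type]

lemma S4_reindex {f g : Fin n → Fin n → Fin n → Fin n → ℝ}
    (σ : Fin n × Fin n × Fin n × Fin n → Fin n × Fin n × Fin n × Fin n)
    (hσ : Function.Bijective σ)
    (h : ∀ j k l m, g j k l m
      = f (σ (j,k,l,m)).1 (σ (j,k,l,m)).2.1 (σ (j,k,l,m)).2.2.1 (σ (j,k,l,m)).2.2.2) :
    S4 g = S4 f := by
  rw [S4_eq_sum, S4_eq_sum]
  calc ∑ p : Fin n × Fin n × Fin n × Fin n, g p.1 p.2.1 p.2.2.1 p.2.2.2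
      = ∑ p : Fin n × Fin n × Fin n × Fin n,
          (fun q : Fin n × Fin n × Fin n × Fin n => f q.1 q.2.1 q.2.2.1 q.2.2.2) (σ p) :=
        Finset.sum_congr rfl (fun p _ => h p.1 p.2.1 p.2.2.1 p.2.2.2)
    _ = _ := by exact hσ.sum_comp fun q => f q.1 q.2.1 q.2.2.1 q.2.2.2

-- σA : (j,k,l,m) ↦ (l,m,k,j)
def σA : Fin n × Fin n × Fin n × Fin n → Fin n × Fin n × Fin n × Fin n :=
  fun p => (p.2.2.1, p.2.2.2, p.2.1, p.1)
lemma σA_bij : Function.Bijective (σA (n := n)) :=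
  Function.bijective_iff_has_inverse.mpr
    ⟨fun p => (p.2.2.2, p.2.2.1, p.1, p.2.1), fun _ => rfl, fun _ => rfl⟩

-- σB : (j,k,l,m) ↦ (m,l,j,k)
def σB : Fin n × Fin n × Fin n × Fin n → Fin n × Fin n × Fin n × Fin n :=
  fun p => (p.2.2.2, p.2.2.1, p.1, p.2.1)
lemma σB_bij : Function.Bijective (σB (n := n)) :=
  Function.bijective_iff_has_inverse.mpr
    ⟨fun p => (p.2.2.1, p.2.2.2, p.2.1, p.1), fun _ => rfl, fun _ => rfl⟩

-- σ1 : (j,k,l,m) ↦ (j,m,k,l)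
def σ1 : Fin n × Fin n × Fin n × Fin n → Fin n × Fin n × Fin n × Fin n :=
  fun p => (p.1, p.2.2.2, p.2.1, p.2.2.1)
lemma σ1_bij : Function.Bijective (σ1 (n := n)) :=
  Function.bijective_iff_has_inverse.mpr
    ⟨fun p => (p.1, p.2.2.1, p.2.2.2, p.2.1), fun _ => rfl, fun _ => rfl⟩

-- σ2 : (j,k,l,m) ↦ (l,m,j,k)
def σ2 : Fin n × Fin n × Fin n × Fin n → Fin n × Fin n × Fin n × Fin n :=
  fun p => (p.2.2.1, p.2.2.2, p.1, p.2.1)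
lemma σ2_bij : Function.Bijective (σ2 (n := n)) :=
  Function.bijective_iff_has_inverse.mpr
    ⟨fun p => (p.2.2.1, p.2.2.2, p.1, p.2.1), fun _ => rfl, fun _ => rfl⟩

-- σ3 : (j,k,l,m) ↦ (k,m,l,j)
def σ3 : Fin n × Fin n × Fin n × Fin n → Fin n × Fin n × Fin n × Fin n :=
  fun p => (p.2.1, p.2.2.2, p.2.2.1, p.1)
lemma σ3_bij : Function.Bijective (σ3 (n := n)) :=
  Function.bijective_iff_has_inverse.mpr
    ⟨fun p => (p.2.2.2, p.1, p.2.2.1, p.2.1), fun _ => rfl, fun _ => rfl⟩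

lemma S4_neg (f : Fin n → Fin n → Fin n → Fin n → ℝ) :
    S4 (fun j k l m => - f j k l m) = - S4 f := by
  simp [S4, Finset.sum_neg_distrib]


variable {n : ℕ} {a : Fin n → Fin n → ℝ} {Da : Fin n → Fin n → Fin n → ℝ}
  {DDa : Fin n → Fin n → Fin n → Fin n → ℝ}

/-- the 15 atoms of one Koszul double bracket -/
def expr (a : Fin n → Fin n → ℝ) (Da : Fin n → Fin n → Fin n → ℝ)
    (DDa : Fin n → Fin n → Fin n → Fin n → ℝ)
    (b : Fin n → ℝ) (Db : Fin n → Fin n → ℝ)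
    (c : Fin n → ℝ) (Dc : Fin n → Fin n → ℝ) (DDc : Fin n → Fin n → Fin n → ℝ)
    (d : Fin n → ℝ) (Dd : Fin n → Fin n → ℝ) (DDd : Fin n → Fin n → Fin n → ℝ)
    (i : Fin n) : ℝ :=
    S4 (fun j k l m => Da i j k * b j * (Da k l m * c l * d m))
  + S4 (fun j k l m => Da i j k * b j * (a l m * Dc l k * d m))
  + S4 (fun j k l m => Da i j k * b j * (a l m * c l * Dd m k))
  + S4 (fun j k l m => a j k * Db j i * (Da k l m * c l * d m))
  + S4 (fun j k l m => a j k * Db j i * (a l m * Dc l k * d m))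
  + S4 (fun j k l m => a j k * Db j i * (a l m * c l * Dd m k))
  + S4 (fun j k l m => a j k * b j * (DDa k i l m * c l * d m))
  + S4 (fun j k l m => a j k * b j * (Da i l m * Dc k l * d m))
  + S4 (fun j k l m => a j k * b j * (Da i l m * c l * Dd k m))
  + S4 (fun j k l m => a j k * b j * (Da k l m * Dc l i * d m))
  + S4 (fun j k l m => a j k * b j * (a l m * DDc k l i * d m))
  + S4 (fun j k l m => a j k * b j * (a l m * Dc l i * Dd k m))
  + S4 (fun j k l m => a j k * b j * (Da k l m * c l * Dd m i))
  + S4 (fun j k l m => a j k * b j * (a l m * Dc k l * Dd m i))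
  + S4 (fun j k l m => a j k * b j * (a l m * c l * DDd k m i))

lemma pairC5C9 (ha : ∀ j k, a j k = - a k j) (T : Fin n → Fin n → Fin n → ℝ)
    (hT : ∀ p q r, T p q r = T q p r) (u w : Fin n → ℝ) (i : Fin n) :
    S4 (fun j k l m => a j k * u j * (a l m * T k l i * w m))
      + S4 (fun j k l m => a j k * w j * (a l m * u l * T k m i)) = 0 := by
  have e : S4 (fun j k l m => a j k * w j * (a l m * u l * T k m i))
      = S4 (fun j k l m => -(a j k * u j * (a l m * T k l i * w m))) := by
    refine S4_reindex σA σA_bij fun j k l m => ?_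
    simp only [σA]
    rw [hT k m, ha j k]; ring
  rw [e]
  rw [S4_neg]; ring

lemma pairB2C6 (ha : ∀ j k, a j k = - a k j) (M DV : Fin n → Fin n → ℝ)
    (w : Fin n → ℝ) (i : Fin n) :
    S4 (fun j k l m => a j k * M j i * (a l m * DV l k * w m))
      + S4 (fun j k l m => a j k * w j * (a l m * M l i * DV k m)) = 0 := by
  have e : S4 (fun j k l m => a j k * w j * (a l m * M l i * DV k m))
      = S4 (fun j k l m => -(a j k * M j i * (a l m * DV l k * w m))) := by
    refine S4_reindex σA σA_bij fun j k l m => ?_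
    simp only [σA]
    rw [ha k j]; ring
  rw [e, S4_neg]; ring

lemma pairB3C8 (ha : ∀ j k, a j k = - a k j) (M : Fin n → Fin n → ℝ)
    (v : Fin n → ℝ) (DW : Fin n → Fin n → ℝ) (i : Fin n) :
    S4 (fun j k l m => a j k * M j i * (a l m * v l * DW m k))
      + S4 (fun j k l m => a j k * v j * (a l m * DW k l * M m i)) = 0 := by
  have e : S4 (fun j k l m => a j k * v j * (a l m * DW k l * M m i))
      = S4 (fun j k l m => -(a j k * M j i * (a l m * v l * DW m k))) := by
    refine S4_reindex σB σB_bij fun j k l m => ?_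
    simp only [σB]
    rw [ha m l]; ring
  rw [e, S4_neg]; ring

lemma pairA2C3 (ha : ∀ j k, a j k = - a k j) (u : Fin n → ℝ)
    (DV : Fin n → Fin n → ℝ) (w : Fin n → ℝ) (i : Fin n) :
    S4 (fun j k l m => Da i j k * u j * (a l m * DV l k * w m))
      + S4 (fun j k l m => a j k * w j * (Da i l m * u l * DV k m)) = 0 := by
  have e : S4 (fun j k l m => a j k * w j * (Da i l m * u l * DV k m))
      = S4 (fun j k l m => -(Da i j k * u j * (a l m * DV l k * w m))) := by
    refine S4_reindex σA σA_bij fun j k l m => ?_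
    simp only [σA]
    rw [ha k j]; ring
  rw [e, S4_neg]; ring

lemma pairC2A3 (hDa : ∀ l j k, Da l j k = - Da l k j) (u : Fin n → ℝ)
    (DV : Fin n → Fin n → ℝ) (w : Fin n → ℝ) (i : Fin n) :
    S4 (fun j k l m => a j k * u j * (Da i l m * DV k l * w m))
      + S4 (fun j k l m => Da i j k * w j * (a l m * u l * DV m k)) = 0 := by
  have e : S4 (fun j k l m => Da i j k * w j * (a l m * u l * DV m k))
      = S4 (fun j k l m => -(a j k * u j * (Da i l m * DV k l * w m))) := by
    refine S4_reindex σA σA_bij fun j k l m => ?_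
    simp only [σA]
    rw [hDa i j k]; ring
  rw [e, S4_neg]; ring

lemma grpJac
    (hjac : ∀ i j k, (∑ l, a i l * Da l j k) + (∑ l, a j l * Da l k i)
      + (∑ l, a k l * Da l i j) = 0)
    (M : Fin n → Fin n → ℝ) (v w : Fin n → ℝ) (i : Fin n) :
    S4 (fun j k l m => a j k * M j i * (Da k l m * v l * w m))
      + S4 (fun j k l m => a j k * w j * (Da k l m * M l i * v m))
      + S4 (fun j k l m => a j k * v j * (Da k l m * w l * M m i)) = 0 := by
  have e1 : S4 (fun j k l m => a j m * M j i * (Da m k l * v k * w l))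
      = S4 (fun j k l m => a j k * M j i * (Da k l m * v l * w m)) :=
    S4_reindex σ1 σ1_bij fun j k l m => rfl
  have e2 : S4 (fun j k l m => a l m * w l * (Da m j k * M j i * v k))
      = S4 (fun j k l m => a j k * w j * (Da k l m * M l i * v m)) :=
    S4_reindex σ2 σ2_bij fun j k l m => rfl
  have e3 : S4 (fun j k l m => a k m * v k * (Da m l j * w l * M j i))
      = S4 (fun j k l m => a j k * v j * (Da k l m * w l * M m i)) :=
    S4_reindex σ3 σ3_bij fun j k l m => rfl
  rw [← e1, ← e2, ← e3]
  have hsplit : S4 (fun j k l m => a j m * M j i * (Da m k l * v k * w l)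
        + a l m * w l * (Da m j k * M j i * v k)
        + a k m * v k * (Da m l j * w l * M j i))
      = S4 (fun j k l m => a j m * M j i * (Da m k l * v k * w l))
        + S4 (fun j k l m => a l m * w l * (Da m j k * M j i * v k))
        + S4 (fun j k l m => a k m * v k * (Da m l j * w l * M j i)) := by
    simp [S4, Finset.sum_add_distrib]
  rw [← hsplit]
  unfold S4
  refine Finset.sum_eq_zero fun j _ => Finset.sum_eq_zero fun k _ =>
    Finset.sum_eq_zero fun l _ => ?_
  calc (∑ m, (a j m * M j i * (Da m k l * v k * w l)
        + a l m * w l * (Da m j k * M j i * v k)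
        + a k m * v k * (Da m l j * w l * M j i)))
      = M j i * v k * w l * ((∑ m, a j m * Da m k l) + (∑ m, a k m * Da m l j)
          + (∑ m, a l m * Da m j k)) := by
        rw [mul_add, mul_add, Finset.mul_sum, Finset.mul_sum, Finset.mul_sum,
          ← Finset.sum_add_distrib, ← Finset.sum_add_distrib]
        exact Finset.sum_congr rfl fun m _ => by ring
    _ = 0 := by rw [hjac j k l, mul_zero]

lemma grpA1C1 (hDDa : ∀ p q j k, DDa p q j k = DDa q p j k)
    (hdjac : ∀ p i j k,
      (∑ l, (Da p i l * Da l j k + a i l * DDa p l j k))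
        + (∑ l, (Da p j l * Da l k i + a j l * DDa p l k i))
        + (∑ l, (Da p k l * Da l i j + a k l * DDa p l i j)) = 0)
    (b c d : Fin n → ℝ) (i : Fin n) :
    S4 (fun j k l m => Da i j k * b j * (Da k l m * c l * d m))
      + S4 (fun j k l m => Da i j k * c j * (Da k l m * d l * b m))
      + S4 (fun j k l m => Da i j k * d j * (Da k l m * b l * c m))
      + S4 (fun j k l m => a j k * b j * (DDa k i l m * c l * d m))
      + S4 (fun j k l m => a j k * c j * (DDa k i l m * d l * b m))
      + S4 (fun j k l m => a j k * d j * (DDa k i l m * b l * c m)) = 0 := by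
  have e1 : S4 (fun j k l m => Da i j m * b j * (Da m k l * c k * d l))
      = S4 (fun j k l m => Da i j k * b j * (Da k l m * c l * d m)) :=
    S4_reindex σ1 σ1_bij fun j k l m => rfl
  have e2 : S4 (fun j k l m => Da i k m * c k * (Da m l j * d l * b j))
      = S4 (fun j k l m => Da i j k * c j * (Da k l m * d l * b m)) :=
    S4_reindex σ3 σ3_bij fun j k l m => rfl
  have e3 : S4 (fun j k l m => Da i l m * d l * (Da m j k * b j * c k))
      = S4 (fun j k l m => Da i j k * d j * (Da k l m * b l * c m)) :=
    S4_reindex σ2 σ2_bij fun j k l m => rfl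
  have e4 : S4 (fun j k l m => a j m * b j * (DDa m i k l * c k * d l))
      = S4 (fun j k l m => a j k * b j * (DDa k i l m * c l * d m)) :=
    S4_reindex σ1 σ1_bij fun j k l m => rfl
  have e5 : S4 (fun j k l m => a k m * c k * (DDa m i l j * d l * b j))
      = S4 (fun j k l m => a j k * c j * (DDa k i l m * d l * b m)) :=
    S4_reindex σ3 σ3_bij fun j k l m => rfl
  have e6 : S4 (fun j k l m => a l m * d l * (DDa m i j k * b j * c k))
      = S4 (fun j k l m => a j k * d j * (DDa k i l m * b l * c m)) :=
    S4_reindex σ2 σ2_bij fun j k l m => rfl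
  rw [← e1, ← e2, ← e3, ← e4, ← e5, ← e6]
  have hsplit : S4 (fun j k l m =>
        Da i j m * b j * (Da m k l * c k * d l)
        + Da i k m * c k * (Da m l j * d l * b j)
        + Da i l m * d l * (Da m j k * b j * c k)
        + a j m * b j * (DDa m i k l * c k * d l)
        + a k m * c k * (DDa m i l j * d l * b j)
        + a l m * d l * (DDa m i j k * b j * c k))
      = S4 (fun j k l m => Da i j m * b j * (Da m k l * c k * d l))
        + S4 (fun j k l m => Da i k m * c k * (Da m l j * d l * b j))
        + S4 (fun j k l m => Da i l m * d l * (Da m j k * b j * c k))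
        + S4 (fun j k l m => a j m * b j * (DDa m i k l * c k * d l))
        + S4 (fun j k l m => a k m * c k * (DDa m i l j * d l * b j))
        + S4 (fun j k l m => a l m * d l * (DDa m i j k * b j * c k)) := by
    simp [S4, Finset.sum_add_distrib]
  rw [← hsplit]
  unfold S4
  refine Finset.sum_eq_zero fun j _ => Finset.sum_eq_zero fun k _ =>
    Finset.sum_eq_zero fun l _ => ?_
  calc (∑ m, (Da i j m * b j * (Da m k l * c k * d l)
        + Da i k m * c k * (Da m l j * d l * b j)
        + Da i l m * d l * (Da m j k * b j * c k)
        + a j m * b j * (DDa m i k l * c k * d l)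
        + a k m * c k * (DDa m i l j * d l * b j)
        + a l m * d l * (DDa m i j k * b j * c k)))
      = b j * c k * d l * ((∑ m, (Da i j m * Da m k l + a j m * DDa i m k l))
          + (∑ m, (Da i k m * Da m l j + a k m * DDa i m l j))
          + (∑ m, (Da i l m * Da m j k + a l m * DDa i m j k))) := by
        rw [mul_add, mul_add, Finset.mul_sum, Finset.mul_sum, Finset.mul_sum,
          ← Finset.sum_add_distrib, ← Finset.sum_add_distrib]
        refine Finset.sum_congr rfl fun m _ => ?_
        rw [hDDa m i k l, hDDa m i l j, hDDa m i j k]; ring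
    _ = 0 := by rw [hdjac i j k l, mul_zero]

lemma key (ha : ∀ j k, a j k = - a k j)
    (hDa : ∀ l j k, Da l j k = - Da l k j)
    (hDDa : ∀ p q j k, DDa p q j k = DDa q p j k)
    (hjac : ∀ i j k, (∑ l, a i l * Da l j k) + (∑ l, a j l * Da l k i)
      + (∑ l, a k l * Da l i j) = 0)
    (hdjac : ∀ p i j k,
      (∑ l, (Da p i l * Da l j k + a i l * DDa p l j k))
        + (∑ l, (Da p j l * Da l k i + a j l * DDa p l k i))
        + (∑ l, (Da p k l * Da l i j + a k l * DDa p l i j)) = 0)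
    (b : Fin n → ℝ) (Db : Fin n → Fin n → ℝ) (DDb : Fin n → Fin n → Fin n → ℝ)
    (c : Fin n → ℝ) (Dc : Fin n → Fin n → ℝ) (DDc : Fin n → Fin n → Fin n → ℝ)
    (d : Fin n → ℝ) (Dd : Fin n → Fin n → ℝ) (DDd : Fin n → Fin n → Fin n → ℝ)
    (hDDb : ∀ p q r, DDb p q r = DDb q p r)
    (hDDc : ∀ p q r, DDc p q r = DDc q p r)
    (hDDd : ∀ p q r, DDd p q r = DDd q p r)
    (i : Fin n) :
    expr a Da DDa b Db c Dc DDc d Dd DDd i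
      + expr a Da DDa c Dc d Dd DDd b Db DDb i
      + expr a Da DDa d Dd b Db DDb c Dc DDc i = 0 := by
  have g1 := grpA1C1 hDDa hdjac b c d i
  have g2 := grpJac hjac Db c d i
  have g3 := grpJac hjac Dc d b i
  have g4 := grpJac hjac Dd b c i
  have p1 := pairC5C9 ha DDc hDDc b d i
  have p2 := pairC5C9 ha DDd hDDd c b i
  have p3 := pairC5C9 ha DDb hDDb d c i
  have p4 := pairB2C6 ha Db Dc d i
  have p5 := pairB2C6 ha Dc Dd b i
  have p6 := pairB2C6 ha Dd Db c i
  have p7 := pairB3C8 ha Db c Dd i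
  have p8 := pairB3C8 ha Dc d Db i
  have p9 := pairB3C8 ha Dd b Dc i
  have p10 := pairA2C3 (Da := Da) ha b Dc d i
  have p11 := pairA2C3 (Da := Da) ha c Dd b i
  have p12 := pairA2C3 (Da := Da) ha d Db c i
  have p13 := pairC2A3 (a := a) hDa b Dc d i
  have p14 := pairC2A3 (a := a) hDa c Dd b i
  have p15 := pairC2A3 (a := a) hDa d Db c i
  simp only [expr]
  linarith [g1, g2, g3, g4, p1, p2, p3, p4, p5, p6, p7, p8, p9, p10, p11, p12,
    p13, p14, p15]



variable {n : ℕ} {U : Set (Fin n → ℝ)} {x : Fin n → ℝ}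

lemma pd_koszul (hU : IsOpen U) (hx : x ∈ U)
    (α : (Fin n → ℝ) → Fin n → Fin n → ℝ)
    (hα : ∀ j k, ContDiffOn ℝ (⊤ : ℕ∞) (fun y => α y j k) U)
    (γ δ : (Fin n → ℝ) → Fin n → ℝ)
    (hγ : ∀ r, ContDiffOn ℝ (⊤ : ℕ∞) (fun y => γ y r) U)
    (hδ : ∀ r, ContDiffOn ℝ (⊤ : ℕ∞) (fun y => δ y r) U)
    (p i : Fin n) :
    pd (fun y => koszul α γ δ y i) p x =
      ((∑ l, ∑ m, (pd (fun y => pd (fun z => α z l m) i y) p x * γ x l * δ x m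
          + pd (fun y => α y l m) i x * pd (fun y => γ y l) p x * δ x m
          + pd (fun y => α y l m) i x * γ x l * pd (fun y => δ y m) p x))
      + (∑ l, ∑ m, (pd (fun y => α y l m) p x * pd (fun y => γ y i) l x * δ x m
          + α x l m * pd (fun y => pd (fun z => γ z i) l y) p x * δ x m
          + α x l m * pd (fun y => γ y i) l x * pd (fun y => δ y m) p x))
      + (∑ l, ∑ m, (pd (fun y => α y l m) p x * γ x l * pd (fun y => δ y i) m x
          + α x l m * pd (fun y => γ y l) p x * pd (fun y => δ y i) m x
          + α x l m * γ x l * pd (fun y => pd (fun z => δ z i) m y) p x))) := by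
  have hxm := hU.mem_nhds hx
  have hA : ∀ j k, ContDiffAt ℝ (⊤ : ℕ∞) (fun y => α y j k) x := fun j k => (hα j k).contDiffAt hxm
  have hG : ∀ r, ContDiffAt ℝ (⊤ : ℕ∞) (fun y => γ y r) x := fun r => (hγ r).contDiffAt hxm
  have hD : ∀ r, ContDiffAt ℝ (⊤ : ℕ∞) (fun y => δ y r) x := fun r => (hδ r).contDiffAt hxm
  have hpA : ∀ l j k, ContDiffAt ℝ (⊤ : ℕ∞) (fun y => pd (fun z => α z j k) l y) x :=
    fun l j k => contDiffAt_pd (hA j k) l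
  have hpG : ∀ l r, ContDiffAt ℝ (⊤ : ℕ∞) (fun y => pd (fun z => γ z r) l y) x :=
    fun l r => contDiffAt_pd (hG r) l
  have hpD : ∀ l r, ContDiffAt ℝ (⊤ : ℕ∞) (fun y => pd (fun z => δ z r) l y) x :=
    fun l r => contDiffAt_pd (hD r) l
  have dP1 : ∀ l m, DifferentiableAt ℝ
      (fun y => pd (fun z => α z l m) i y * γ y l * δ y m) x :=
    fun l m => (((hpA i l m).mul (hG l)).mul (hD m)).differentiableAt (by simp)
  have dP2 : ∀ l m, DifferentiableAt ℝ
      (fun y => α y l m * pd (fun z => γ z i) l y * δ y m) x :=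
    fun l m => (((hA l m).mul (hpG l i)).mul (hD m)).differentiableAt (by simp)
  have dP3 : ∀ l m, DifferentiableAt ℝ
      (fun y => α y l m * γ y l * pd (fun z => δ z i) m y) x :=
    fun l m => (((hA l m).mul (hG l)).mul (hpD m i)).differentiableAt (by simp)
  have dS1 : ∀ l, DifferentiableAt ℝ
      (fun y => ∑ m, pd (fun z => α z l m) i y * γ y l * δ y m) x :=
    fun l => DifferentiableAt.fun_sum (fun m _ => dP1 l m)
  have dS2 : ∀ l, DifferentiableAt ℝ
      (fun y => ∑ m, α y l m * pd (fun z => γ z i) l y * δ y m) x :=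
    fun l => DifferentiableAt.fun_sum (fun m _ => dP2 l m)
  have dS3 : ∀ l, DifferentiableAt ℝ
      (fun y => ∑ m, α y l m * γ y l * pd (fun z => δ z i) m y) x :=
    fun l => DifferentiableAt.fun_sum (fun m _ => dP3 l m)
  have dF1 : DifferentiableAt ℝ
      (fun y => ∑ l, ∑ m, pd (fun z => α z l m) i y * γ y l * δ y m) x :=
    DifferentiableAt.fun_sum (fun l _ => dS1 l)
  have dF2 : DifferentiableAt ℝ
      (fun y => ∑ l, ∑ m, α y l m * pd (fun z => γ z i) l y * δ y m) x :=
    DifferentiableAt.fun_sum (fun l _ => dS2 l)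
  have dF3 : DifferentiableAt ℝ
      (fun y => ∑ l, ∑ m, α y l m * γ y l * pd (fun z => δ z i) m y) x :=
    DifferentiableAt.fun_sum (fun l _ => dS3 l)
  calc pd (fun y => koszul α γ δ y i) p x
      = pd (fun y => ((∑ l, ∑ m, pd (fun z => α z l m) i y * γ y l * δ y m)
          + (∑ l, ∑ m, α y l m * pd (fun z => γ z i) l y * δ y m))
          + (∑ l, ∑ m, α y l m * γ y l * pd (fun z => δ z i) m y)) p x := rfl
    _ = _ := by
        rw [pd_add (dF1.fun_add dF2) dF3, pd_add dF1 dF2]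
        congr 1
        · congr 1
          · rw [pd_sum _ (fun l _ => dS1 l) p]
            refine Finset.sum_congr rfl fun l _ => ?_
            rw [pd_sum _ (fun m _ => dP1 l m) p]
            refine Finset.sum_congr rfl fun m _ => ?_
            exact pd_mul3 ((hpA i l m).differentiableAt (by simp))
              ((hG l).differentiableAt (by simp)) ((hD m).differentiableAt (by simp)) p
          · rw [pd_sum _ (fun l _ => dS2 l) p]
            refine Finset.sum_congr rfl fun l _ => ?_
            rw [pd_sum _ (fun m _ => dP2 l m) p]
            refine Finset.sum_congr rfl fun m _ => ?_
            exact pd_mul3 ((hA l m).differentiableAt (by simp))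
              ((hpG l i).differentiableAt (by simp)) ((hD m).differentiableAt (by simp)) p
        · rw [pd_sum _ (fun l _ => dS3 l) p]
          refine Finset.sum_congr rfl fun l _ => ?_
          rw [pd_sum _ (fun m _ => dP3 l m) p]
          refine Finset.sum_congr rfl fun m _ => ?_
          exact pd_mul3 ((hA l m).differentiableAt (by simp))
            ((hG l).differentiableAt (by simp)) ((hpD m i).differentiableAt (by simp)) p

lemma djac (hU : IsOpen U) (hx : x ∈ U)
    (α : (Fin n → ℝ) → Fin n → Fin n → ℝ)
    (hα : ∀ j k, ContDiffOn ℝ (⊤ : ℕ∞) (fun y => α y j k) U)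
    (hjac : ∀ y ∈ U, ∀ i j k,
      (∑ l, α y i l * pd (fun z => α z j k) l y)
        + (∑ l, α y j l * pd (fun z => α z k i) l y)
        + (∑ l, α y k l * pd (fun z => α z i j) l y) = 0)
    (p i j k : Fin n) :
    (∑ l, (pd (fun y => α y i l) p x * pd (fun y => α y j k) l x
        + α x i l * pd (fun y => pd (fun z => α z j k) l y) p x))
      + (∑ l, (pd (fun y => α y j l) p x * pd (fun y => α y k i) l x
        + α x j l * pd (fun y => pd (fun z => α z k i) l y) p x))
      + (∑ l, (pd (fun y => α y k l) p x * pd (fun y => α y i j) l x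
        + α x k l * pd (fun y => pd (fun z => α z i j) l y) p x)) = 0 := by
  have hxm := hU.mem_nhds hx
  have hA : ∀ j k, ContDiffAt ℝ (⊤ : ℕ∞) (fun y => α y j k) x := fun j k => (hα j k).contDiffAt hxm
  have hpA : ∀ l j k, ContDiffAt ℝ (⊤ : ℕ∞) (fun y => pd (fun z => α z j k) l y) x :=
    fun l j k => contDiffAt_pd (hA j k) l
  have dT1 : ∀ l, DifferentiableAt ℝ (fun y => α y i l * pd (fun z => α z j k) l y) x :=
    fun l => ((hA i l).mul (hpA l j k)).differentiableAt (by simp)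
  have dT2 : ∀ l, DifferentiableAt ℝ (fun y => α y j l * pd (fun z => α z k i) l y) x :=
    fun l => ((hA j l).mul (hpA l k i)).differentiableAt (by simp)
  have dT3 : ∀ l, DifferentiableAt ℝ (fun y => α y k l * pd (fun z => α z i j) l y) x :=
    fun l => ((hA k l).mul (hpA l i j)).differentiableAt (by simp)
  have dS1 : DifferentiableAt ℝ (fun y => ∑ l, α y i l * pd (fun z => α z j k) l y) x :=
    DifferentiableAt.fun_sum (fun l _ => dT1 l)
  have dS2 : DifferentiableAt ℝ (fun y => ∑ l, α y j l * pd (fun z => α z k i) l y) x :=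
    DifferentiableAt.fun_sum (fun l _ => dT2 l)
  have dS3 : DifferentiableAt ℝ (fun y => ∑ l, α y k l * pd (fun z => α z i j) l y) x :=
    DifferentiableAt.fun_sum (fun l _ => dT3 l)
  have hev : (fun y => (∑ l, α y i l * pd (fun z => α z j k) l y)
        + (∑ l, α y j l * pd (fun z => α z k i) l y)
        + (∑ l, α y k l * pd (fun z => α z i j) l y)) =ᶠ[nhds x] (fun _ => (0:ℝ)) :=
    Filter.eventuallyEq_of_mem hxm (fun y hy => hjac y hy i j k)
  have h0 : pd (fun y => (∑ l, α y i l * pd (fun z => α z j k) l y)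
        + (∑ l, α y j l * pd (fun z => α z k i) l y)
        + (∑ l, α y k l * pd (fun z => α z i j) l y)) p x = 0 := by
    rw [pd_congr hev p, pd_zero]
  have e : pd (fun y => (∑ l, α y i l * pd (fun z => α z j k) l y)
        + (∑ l, α y j l * pd (fun z => α z k i) l y)
        + (∑ l, α y k l * pd (fun z => α z i j) l y)) p x
      = (∑ l, (pd (fun y => α y i l) p x * pd (fun y => α y j k) l x
          + α x i l * pd (fun y => pd (fun z => α z j k) l y) p x))
        + (∑ l, (pd (fun y => α y j l) p x * pd (fun y => α y k i) l x
          + α x j l * pd (fun y => pd (fun z => α z k i) l y) p x))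
        + (∑ l, (pd (fun y => α y k l) p x * pd (fun y => α y i j) l x
          + α x k l * pd (fun y => pd (fun z => α z i j) l y) p x)) := by
    rw [pd_add (dS1.fun_add dS2) dS3, pd_add dS1 dS2]
    congr 1
    · congr 1
      · rw [pd_sum _ (fun l _ => dT1 l) p]
        exact Finset.sum_congr rfl fun l _ =>
          pd_mul ((hA i l).differentiableAt (by simp)) ((hpA l j k).differentiableAt (by simp)) p
      · rw [pd_sum _ (fun l _ => dT2 l) p]
        exact Finset.sum_congr rfl fun l _ =>
          pd_mul ((hA j l).differentiableAt (by simp)) ((hpA l k i).differentiableAt (by simp)) p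
    · rw [pd_sum _ (fun l _ => dT3 l) p]
      exact Finset.sum_congr rfl fun l _ =>
        pd_mul ((hA k l).differentiableAt (by simp)) ((hpA l i j).differentiableAt (by simp)) p
  rw [← e]
  exact h0



set_option maxHeartbeats 2000000 in
lemma koszul_koszul (hU : IsOpen U) (hx : x ∈ U)
    (α : (Fin n → ℝ) → Fin n → Fin n → ℝ)
    (hα : ∀ j k, ContDiffOn ℝ (⊤ : ℕ∞) (fun y => α y j k) U)
    (β γ δ : (Fin n → ℝ) → Fin n → ℝ)
    (hβ : ∀ r, ContDiffOn ℝ (⊤ : ℕ∞) (fun y => β y r) U)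
    (hγ : ∀ r, ContDiffOn ℝ (⊤ : ℕ∞) (fun y => γ y r) U)
    (hδ : ∀ r, ContDiffOn ℝ (⊤ : ℕ∞) (fun y => δ y r) U)
    (i : Fin n) :
    koszul α β (koszul α γ δ) x i =
      expr (α x) (fun l j k => pd (fun y => α y j k) l x)
        (fun p l j k => pd (fun y => pd (fun z => α z j k) l y) p x)
        (β x) (fun l r => pd (fun y => β y r) l x)
        (γ x) (fun l r => pd (fun y => γ y r) l x)
        (fun p l r => pd (fun y => pd (fun z => γ z r) l y) p x)
        (δ x) (fun l r => pd (fun y => δ y r) l x)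
        (fun p l r => pd (fun y => pd (fun z => δ z r) l y) p x) i := by
  have hpdk : ∀ k, pd (fun y => koszul α γ δ y i) k x =
      ((∑ l, ∑ m, (pd (fun y => pd (fun z => α z l m) i y) k x * γ x l * δ x m
          + pd (fun y => α y l m) i x * pd (fun y => γ y l) k x * δ x m
          + pd (fun y => α y l m) i x * γ x l * pd (fun y => δ y m) k x))
      + (∑ l, ∑ m, (pd (fun y => α y l m) k x * pd (fun y => γ y i) l x * δ x m
          + α x l m * pd (fun y => pd (fun z => γ z i) l y) k x * δ x m
          + α x l m * pd (fun y => γ y i) l x * pd (fun y => δ y m) k x))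
      + (∑ l, ∑ m, (pd (fun y => α y l m) k x * γ x l * pd (fun y => δ y i) m x
          + α x l m * pd (fun y => γ y l) k x * pd (fun y => δ y i) m x
          + α x l m * γ x l * pd (fun y => pd (fun z => δ z i) m y) k x))) :=
    fun k => pd_koszul hU hx α hα γ δ hγ hδ k i
  have hGk : ∀ k, koszul α γ δ x k =
      ((∑ l, ∑ m, pd (fun y => α y l m) k x * γ x l * δ x m)
      + (∑ l, ∑ m, α x l m * pd (fun y => γ y k) l x * δ x m)
      + (∑ l, ∑ m, α x l m * γ x l * pd (fun y => δ y k) m x)) := fun k => rfl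
  calc koszul α β (koszul α γ δ) x i
      = (∑ j, ∑ k, pd (fun y => α y j k) i x * β x j * koszul α γ δ x k)
        + (∑ j, ∑ k, α x j k * pd (fun y => β y i) j x * koszul α γ δ x k)
        + (∑ j, ∑ k, α x j k * β x j * pd (fun y => koszul α γ δ y i) k x) := rfl
    _ = _ := by
        simp only [hpdk, hGk, expr, S4]
        simp only [mul_add, Finset.mul_sum, Finset.sum_add_distrib]
        ring_nf

end KoszulAux

open KoszulAux in
/-- The Koszul bracket of one-forms satisfies the Jacobi identity whenever the
bivector `α` is antisymmetric and satisfies the Poisson Jacobi identity. -/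
theorem koszul_jacobi {n : ℕ} (U : Set (Fin n → ℝ)) (hU : IsOpen U)
    (α : (Fin n → ℝ) → Fin n → Fin n → ℝ)
    (hα : ∀ j k, ContDiffOn ℝ (⊤ : ℕ∞) (fun x => α x j k) U)
    (hanti : ∀ x ∈ U, ∀ j k, α x j k = - α x k j)
    (hjac : ∀ x ∈ U, ∀ i j k,
      (∑ l, α x i l * pd (fun y => α y j k) l x)
        + (∑ l, α x j l * pd (fun y => α y k i) l x)
        + (∑ l, α x k l * pd (fun y => α y i j) l x) = 0)
    (β γ δ : (Fin n → ℝ) → Fin n → ℝ)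
    (hβ : ∀ i, ContDiffOn ℝ (⊤ : ℕ∞) (fun x => β x i) U)
    (hγ : ∀ i, ContDiffOn ℝ (⊤ : ℕ∞) (fun x => γ x i) U)
    (hδ : ∀ i, ContDiffOn ℝ (⊤ : ℕ∞) (fun x => δ x i) U) :
    ∀ x ∈ U, ∀ i,
      koszul α β (koszul α γ δ) x i + koszul α γ (koszul α δ β) x i
        + koszul α δ (koszul α β γ) x i = 0 := by
  intro x hx i
  have hxm := hU.mem_nhds hx
  have hA : ∀ j k, ContDiffAt ℝ (⊤ : ℕ∞) (fun y => α y j k) x := fun j k => (hα j k).contDiffAt hxm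
  have hB : ∀ r, ContDiffAt ℝ (⊤ : ℕ∞) (fun y => β y r) x := fun r => (hβ r).contDiffAt hxm
  have hG : ∀ r, ContDiffAt ℝ (⊤ : ℕ∞) (fun y => γ y r) x := fun r => (hγ r).contDiffAt hxm
  have hD : ∀ r, ContDiffAt ℝ (⊤ : ℕ∞) (fun y => δ y r) x := fun r => (hδ r).contDiffAt hxm
  have ha' : ∀ j k, α x j k = - α x k j := hanti x hx
  have hDa' : ∀ l j k, pd (fun y => α y j k) l x = - pd (fun y => α y k j) l x := by
    intro l j k
    have hev : (fun y => α y j k) =ᶠ[nhds x] (fun y => - α y k j) :=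
      Filter.eventuallyEq_of_mem hxm (fun y hy => hanti y hy j k)
    rw [pd_congr hev l, pd_neg]
  have hDDa' : ∀ p q j k, pd (fun y => pd (fun z => α z j k) q y) p x
      = pd (fun y => pd (fun z => α z j k) p y) q x := fun p q j k => pd_comm (hA j k) q p
  have hDDb' : ∀ p q r, pd (fun y => pd (fun z => β z r) q y) p x
      = pd (fun y => pd (fun z => β z r) p y) q x := fun p q r => pd_comm (hB r) q p
  have hDDc' : ∀ p q r, pd (fun y => pd (fun z => γ z r) q y) p x
      = pd (fun y => pd (fun z => γ z r) p y) q x := fun p q r => pd_comm (hG r) q p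
  have hDDd' : ∀ p q r, pd (fun y => pd (fun z => δ z r) q y) p x
      = pd (fun y => pd (fun z => δ z r) p y) q x := fun p q r => pd_comm (hD r) q p
  have hjac' : ∀ i j k, (∑ l, α x i l * pd (fun y => α y j k) l x)
      + (∑ l, α x j l * pd (fun y => α y k i) l x)
      + (∑ l, α x k l * pd (fun y => α y i j) l x) = 0 := hjac x hx
  have hdjac' := djac hU hx α hα hjac
  have h1 := koszul_koszul hU hx α hα β γ δ hβ hγ hδ i
  have h2 := koszul_koszul hU hx α hα γ δ β hγ hδ hβ i
  have h3 := koszul_koszul hU hx α hα δ β γ hδ hβ hγ i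
  rw [h1, h2, h3]
  exact key ha' hDa' hDDa' hjac' hdjac' (β x) _ _ (γ x) _ _ (δ x) _ _ hDDb' hDDc' hDDd' i
end

section
/- Along any solution of the constraint equation of the Poisson sigma model, the function φ∘X satisfies the linear ODE (φ∘X)' = T·(φ∘X), where T = (∂₂φ∘X)·η₁ − (∂₁φ∘X)·η₂; consequently φ(X(u)) = φ(X(0))·exp(∫₀ᵘ T(v) dv) for all u ∈ I. -/
open Set

/-- Partial derivatives of a function on `ℝ²`. -/
noncomputable def pd1 (φ : ℝ × ℝ → ℝ) (p : ℝ × ℝ) : ℝ := fderiv ℝ φ p (1, 0)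
noncomputable def pd2 (φ : ℝ × ℝ → ℝ) (p : ℝ × ℝ) : ℝ := fderiv ℝ φ p (0, 1)

/-- Along a solution of the two-dimensional constraint equation, `φ ∘ X` satisfies
`(φ∘X)' = T·(φ∘X)` with `T = (∂₂φ∘X)η₁ − (∂₁φ∘X)η₂`, hence
`φ(X(u)) = φ(X(0))·exp(∫₀ᵘ T)`. -/
theorem phi_along_solution (U : Set (ℝ × ℝ)) (hU : IsOpen U) (φ : ℝ × ℝ → ℝ)
    (hφ : ContDiffOn ℝ (⊤ : ℕ∞) φ U)
    (X : ℝ → ℝ × ℝ) (η₁ η₂ : ℝ → ℝ)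
    (hXU : ∀ u ∈ Icc (0:ℝ) 1, X u ∈ U)
    (hη₁ : ContinuousOn η₁ (Icc 0 1)) (hη₂ : ContinuousOn η₂ (Icc 0 1))
    (hX1 : ∀ u ∈ Icc (0:ℝ) 1, HasDerivAt (fun v => (X v).1) (-(φ (X u) * η₂ u)) u)
    (hX2 : ∀ u ∈ Icc (0:ℝ) 1, HasDerivAt (fun v => (X v).2) (φ (X u) * η₁ u) u)
    (T : ℝ → ℝ)
    (hT : ∀ u, T u = pd2 φ (X u) * η₁ u - pd1 φ (X u) * η₂ u) :
    (∀ u ∈ Icc (0:ℝ) 1, HasDerivAt (fun v => φ (X v)) (T u * φ (X u)) u) ∧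
    (∀ u ∈ Icc (0:ℝ) 1, φ (X u) = φ (X 0) * Real.exp (∫ v in (0:ℝ)..u, T v)) := by
  have hXeq : (fun v => ((X v).1, (X v).2)) = X := by
    funext v; exact Prod.mk.eta
  -- Part 1: the derivative of φ ∘ X
  have part1 : ∀ u ∈ Icc (0:ℝ) 1,
      HasDerivAt (fun v => φ (X v)) (T u * φ (X u)) u := by
    intro u hu
    have hd : HasDerivAt X (-(φ (X u) * η₂ u), φ (X u) * η₁ u) u := by
      have := (hX1 u hu).prodMk (hX2 u hu)
      rwa [hXeq] at this
    have hφd : DifferentiableAt ℝ φ (X u) :=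
      (hφ.contDiffAt (hU.mem_nhds (hXU u hu))).differentiableAt (by simp)
    have hcomp := hφd.hasFDerivAt.comp_hasDerivAt u hd
    have hvec : ((-(φ (X u) * η₂ u), φ (X u) * η₁ u) : ℝ × ℝ)
        = (-(φ (X u) * η₂ u)) • ((1:ℝ), (0:ℝ)) + (φ (X u) * η₁ u) • ((0:ℝ), (1:ℝ)) := by
      simp [Prod.ext_iff]
    have key : T u * φ (X u)
        = fderiv ℝ φ (X u) (-(φ (X u) * η₂ u), φ (X u) * η₁ u) := by
      rw [hvec, map_add, map_smul, map_smul, hT]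
      simp only [pd1, pd2, smul_eq_mul]
      ring
    rw [key]
    exact hcomp
  refine ⟨part1, ?_⟩
  -- Continuity facts
  have hcX : ContinuousOn X (Icc 0 1) := by
    intro x hx
    have : ContinuousAt X x := by
      have := ((hX1 x hx).continuousAt.prodMk (hX2 x hx).continuousAt)
      rwa [hXeq] at this
    exact this.continuousWithinAt
  have hf' : ContinuousOn (fderiv ℝ φ) U :=
    hφ.continuousOn_fderiv_of_isOpen hU (by simp)
  have hXmaps : MapsTo X (Icc 0 1) U := fun x hx => hXU x hx
  have hp1 : ContinuousOn (fun u => pd1 φ (X u)) (Icc 0 1) :=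
    ((hf'.clm_apply continuousOn_const).comp hcX hXmaps)
  have hp2 : ContinuousOn (fun u => pd2 φ (X u)) (Icc 0 1) :=
    ((hf'.clm_apply continuousOn_const).comp hcX hXmaps)
  have hTc : ContinuousOn T (Icc 0 1) := by
    have : T = fun u => pd2 φ (X u) * η₁ u - pd1 φ (X u) * η₂ u := funext hT
    rw [this]
    exact (hp2.mul hη₁).sub (hp1.mul hη₂)
  set F : ℝ → ℝ := fun u => ∫ v in (0:ℝ)..u, T v with hF
  have hint : ∀ u ∈ Icc (0:ℝ) 1, IntervalIntegrable T MeasureTheory.volume 0 u := by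
    intro u hu
    refine (hTc.mono ?_).intervalIntegrable
    rw [uIcc_of_le hu.1]
    exact Icc_subset_Icc le_rfl hu.2
  have hmem : ∀ x ∈ Ico (0:ℝ) 1, Icc (0:ℝ) 1 ∈ nhdsWithin x (Ioi x) := by
    intro x hx
    refine mem_nhdsWithin.2 ⟨Iio 1, isOpen_Iio, hx.2, ?_⟩
    rintro y ⟨hy1, hy2⟩
    exact ⟨le_trans hx.1 hy2.le, le_of_lt hy1⟩
  have hFd : ∀ x ∈ Ico (0:ℝ) 1, HasDerivWithinAt F (T x) (Ici x) x := by
    intro x hx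
    refine intervalIntegral.integral_hasDerivWithinAt_right
      (hint x ⟨hx.1, hx.2.le⟩)
      ⟨Icc 0 1, hmem x hx, hTc.aestronglyMeasurable measurableSet_Icc⟩ ?_
    exact (hTc x ⟨hx.1, hx.2.le⟩).mono_of_mem_nhdsWithin (hmem x hx)
  have hFc : ContinuousOn F (Icc 0 1) := by
    have hio : MeasureTheory.IntegrableOn T (uIcc (0:ℝ) 1) MeasureTheory.volume := by
      rw [uIcc_of_le (zero_le_one : (0:ℝ) ≤ 1)]
      exact hTc.integrableOn_Icc
    have := intervalIntegral.continuousOn_primitive_interval hio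
    rwa [uIcc_of_le (zero_le_one : (0:ℝ) ≤ 1)] at this
  set h : ℝ → ℝ := fun u => φ (X u) * Real.exp (-F u) with hh
  have hhd : ∀ x ∈ Ico (0:ℝ) 1, HasDerivWithinAt h 0 (Ici x) x := by
    intro x hx
    have hg := (part1 x ⟨hx.1, hx.2.le⟩).hasDerivWithinAt (s := Ici x)
    have hE := ((hFd x hx).neg).exp
    have hmul := hg.mul hE
    have h0 : T x * φ (X x) * Real.exp (-F x) + φ (X x) * (Real.exp (-F x) * -T x) = 0 := by
      ring
    exact h0 ▸ hmul
  have hhc : ContinuousOn h (Icc 0 1) := by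
    refine ContinuousOn.mul ?_ (Real.continuous_exp.comp_continuousOn hFc.neg)
    intro x hx
    exact (part1 x hx).continuousAt.continuousWithinAt
  have hconst := constant_of_has_deriv_right_zero hhc hhd
  intro u hu
  have hu0 : h u = h 0 := hconst u hu
  have hF0 : F 0 = 0 := intervalIntegral.integral_same
  have h0val : h 0 = φ (X 0) := by
    simp [hh, hF0]
  have : φ (X u) = h u * Real.exp (F u) := by
    rw [hh]
    simp only
    rw [mul_assoc, ← Real.exp_add, neg_add_cancel, Real.exp_zero, mul_one]
  rw [this, hu0, h0val]
end

section
/- In particular, the sign of φ∘X is constant along any solution of the two-dimensional constraint equation: either φ(X(u)) = 0 for all u, or φ(X(u)) has the same (nonzero) sign as φ(X(0)) for all u ∈ [0,1]. -/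
open Set

/-- The sign of `φ ∘ X` is constant along any solution of the two-dimensional
constraint equation: either it vanishes identically, or it keeps the same
nonzero sign as at `u = 0`. -/
theorem sign_phi_constant (U : Set (ℝ × ℝ)) (hU : IsOpen U) (φ : ℝ × ℝ → ℝ)
    (hφ : ContDiffOn ℝ (⊤ : ℕ∞) φ U)
    (X : ℝ → ℝ × ℝ) (η₁ η₂ : ℝ → ℝ)
    (hXU : ∀ u ∈ Icc (0:ℝ) 1, X u ∈ U)
    (hη₁ : ContinuousOn η₁ (Icc 0 1)) (hη₂ : ContinuousOn η₂ (Icc 0 1))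
    (hX1 : ∀ u ∈ Icc (0:ℝ) 1, HasDerivAt (fun v => (X v).1) (-(φ (X u) * η₂ u)) u)
    (hX2 : ∀ u ∈ Icc (0:ℝ) 1, HasDerivAt (fun v => (X v).2) (φ (X u) * η₁ u) u) :
    ∀ u ∈ Icc (0:ℝ) 1, Real.sign (φ (X u)) = Real.sign (φ (X 0)) := by
  have h01 : (0:ℝ) ≤ 1 := zero_le_one
  set f : ℝ → ℝ := fun u => φ (X u) with hfdef
  -- X is continuous on [0,1]
  have hXc : ContinuousOn X (Icc 0 1) := by
    intro u hu
    have h1 := (hX1 u hu).continuousAt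
    have h2 := (hX2 u hu).continuousAt
    have : ContinuousAt (fun v => ((X v).1, (X v).2)) u := h1.prodMk h2
    exact this.continuousWithinAt
  -- derivative of X
  have hXd : ∀ u ∈ Icc (0:ℝ) 1,
      HasDerivAt X (f u • (-η₂ u, η₁ u)) u := by
    intro u hu
    have := (hX1 u hu).prodMk (hX2 u hu)
    have heq : (f u • ((-η₂ u, η₁ u) : ℝ × ℝ)) = (-(φ (X u) * η₂ u), φ (X u) * η₁ u) := by
      simp [Prod.smul_mk, smul_eq_mul, mul_neg, hfdef]
    rw [heq]; exact this
  -- φ is differentiable on U with continuous derivative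
  have hφd : ∀ u ∈ Icc (0:ℝ) 1, HasFDerivAt φ (fderiv ℝ φ (X u)) (X u) := by
    intro u hu
    have : DifferentiableAt ℝ φ (X u) :=
      (hφ.differentiableOn (by simp)).differentiableAt (hU.mem_nhds (hXU u hu))
    exact this.hasFDerivAt
  set g : ℝ → ℝ := fun u => (fderiv ℝ φ (X u)) (-η₂ u, η₁ u) with hgdef
  -- f' = f * g
  have hfd : ∀ u ∈ Icc (0:ℝ) 1, HasDerivAt f (f u * g u) u := by
    intro u hu
    have h := (hφd u hu).comp_hasDerivAt u (hXd u hu)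
    have : (fderiv ℝ φ (X u)) (f u • (-η₂ u, η₁ u)) = f u * g u := by
      rw [map_smul]; simp [hgdef, smul_eq_mul]
    rw [this] at h
    exact h
  -- g is continuous on [0,1]
  have hgc : ContinuousOn g (Icc 0 1) := by
    have hdc : ContinuousOn (fun u => fderiv ℝ φ (X u)) (Icc 0 1) :=
      (hφ.continuousOn_fderiv_of_isOpen hU (by simp)).comp hXc hXU
    exact hdc.clm_apply ((hη₂.neg).prodMk hη₁)
  -- extend g continuously to ℝ
  set g' : ℝ → ℝ := fun u => g ((projIcc 0 1 h01 u : ℝ)) with hg'def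
  have hg'c : Continuous g' :=
    hgc.comp_continuous (continuous_subtype_val.comp (continuous_projIcc))
      (fun u => (projIcc 0 1 h01 u).2)
  have hg'eq : ∀ u ∈ Icc (0:ℝ) 1, g' u = g u := by
    intro u hu
    simp [hg'def, projIcc_of_mem h01 hu]
  set G : ℝ → ℝ := fun u => ∫ t in (0:ℝ)..u, g' t with hGdef
  have hGd : ∀ u : ℝ, HasDerivAt G (g' u) u := fun u =>
    (hg'c.integral_hasStrictDerivAt 0 u).hasDerivAt
  -- h = f * exp(-G) has zero derivative on [0,1]
  set h : ℝ → ℝ := fun u => f u * Real.exp (-G u) with hhdef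
  have hhd : ∀ u ∈ Icc (0:ℝ) 1, HasDerivAt h 0 u := by
    intro u hu
    have hE : HasDerivAt (fun v => Real.exp (-G v)) (Real.exp (-G u) * (-g' u)) u := by
      have := ((hGd u).neg).exp
      simpa [mul_comm] using this
    have := (hfd u hu).mul hE
    have hkey : f u * g u * Real.exp (-G u) + f u * (Real.exp (-G u) * -g' u) = 0 := by
      rw [hg'eq u hu]; ring
    rw [hkey] at this
    exact this
  have hhcont : ContinuousOn h (Icc 0 1) := fun u hu => (hhd u hu).continuousAt.continuousWithinAt
  have hconst : ∀ u ∈ Icc (0:ℝ) 1, h u = h 0 := by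
    apply constant_of_has_deriv_right_zero hhcont
    intro u hu
    exact (hhd u (Ico_subset_Icc_self hu)).hasDerivWithinAt
  -- conclude
  intro u hu
  have hG0 : G 0 = 0 := intervalIntegral.integral_same
  have := hconst u hu
  simp only [hhdef, hG0, neg_zero, Real.exp_zero, mul_one] at this
  have hfu : f u = f 0 * Real.exp (G u) := by
    have hpos : Real.exp (-G u) ≠ 0 := (Real.exp_pos _).ne'
    field_simp [Real.exp_neg] at this ⊢
    calc f u = f u * Real.exp (-G u) * Real.exp (G u) := by
          rw [mul_assoc, ← Real.exp_add, neg_add_cancel, Real.exp_zero, mul_one]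
      _ = f 0 * Real.exp (G u) := by rw [this]
  show Real.sign (f u) = Real.sign (f 0)
  rw [hfu]
  rcases lt_trichotomy (f 0) 0 with hlt | heq | hgt
  · rw [Real.sign_of_neg hlt, Real.sign_of_neg (mul_neg_of_neg_of_pos hlt (Real.exp_pos _))]
  · simp [heq]
  · rw [Real.sign_of_pos hgt, Real.sign_of_pos (mul_pos hgt (Real.exp_pos _))]
end

section
/- If φ(X(0)) = 0 for a solution (X,η) of the two-dimensional constraint equation, then X is constant on [0,1]. -/
open Set

/-- If `φ(X(0)) = 0` for a solution of the two-dimensional constraint equation,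
then `X` is constant on `[0,1]`. -/
theorem X_constant_of_phi_zero (U : Set (ℝ × ℝ)) (hU : IsOpen U) (φ : ℝ × ℝ → ℝ)
    (hφ : ContDiffOn ℝ (⊤ : ℕ∞) φ U)
    (X : ℝ → ℝ × ℝ) (η₁ η₂ : ℝ → ℝ)
    (hXU : ∀ u ∈ Icc (0:ℝ) 1, X u ∈ U)
    (hη₁ : ContinuousOn η₁ (Icc 0 1)) (hη₂ : ContinuousOn η₂ (Icc 0 1))
    (hX1 : ∀ u ∈ Icc (0:ℝ) 1, HasDerivAt (fun v => (X v).1) (-(φ (X u) * η₂ u)) u)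
    (hX2 : ∀ u ∈ Icc (0:ℝ) 1, HasDerivAt (fun v => (X v).2) (φ (X u) * η₁ u) u)
    (h0 : φ (X 0) = 0) :
    ∀ u ∈ Icc (0:ℝ) 1, X u = X 0 := by
  set g : ℝ → ℝ := fun u => φ (X u) with hg_def
  -- derivative of X
  have hXd : ∀ u ∈ Icc (0:ℝ) 1,
      HasDerivAt X (g u • (-η₂ u, η₁ u)) u := by
    intro u hu
    have h := (hX1 u hu).prodMk (hX2 u hu)
    have : ((-(φ (X u) * η₂ u), φ (X u) * η₁ u) : ℝ × ℝ) = g u • (-η₂ u, η₁ u) := by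
      simp [hg_def, Prod.ext_iff, mul_comm]
    rw [this] at h
    exact h
  -- X is continuous on Icc
  have hXc : ContinuousOn X (Icc 0 1) := fun u hu =>
    ((hXd u hu).continuousAt).continuousWithinAt
  -- fderiv of φ along X
  have hφd : ∀ u ∈ Icc (0:ℝ) 1, HasFDerivAt φ (fderiv ℝ φ (X u)) (X u) := by
    intro u hu
    exact ((hφ.contDiffAt (hU.mem_nhds (hXU u hu))).differentiableAt (by simp)).hasFDerivAt
  -- derivative of g
  have hgd : ∀ u ∈ Icc (0:ℝ) 1,
      HasDerivAt g (g u * fderiv ℝ φ (X u) (-η₂ u, η₁ u)) u := by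
    intro u hu
    have h := (hφd u hu).comp_hasDerivAt u (hXd u hu)
    have : fderiv ℝ φ (X u) (g u • (-η₂ u, η₁ u))
        = g u * fderiv ℝ φ (X u) (-η₂ u, η₁ u) := by
      rw [map_smul]; rfl
    rw [this] at h
    exact h
  have hgc : ContinuousOn g (Icc 0 1) := fun u hu =>
    ((hgd u hu).continuousAt).continuousWithinAt
  -- bound K
  have hBcont : ContinuousOn (fun u => ‖fderiv ℝ φ (X u)‖ * ‖((-η₂ u, η₁ u) : ℝ × ℝ)‖)
      (Icc 0 1) := by
    apply ContinuousOn.mul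
    · exact ((hφ.continuousOn_fderiv_of_isOpen hU (by simp)).comp hXc hXU).norm
    · exact (((hη₂.neg).prodMk hη₁).norm)
  obtain ⟨K, hK⟩ : ∃ K, ∀ u ∈ Icc (0:ℝ) 1,
      ‖fderiv ℝ φ (X u)‖ * ‖((-η₂ u, η₁ u) : ℝ × ℝ)‖ ≤ K := by
    obtain ⟨K, hK⟩ := (isCompact_Icc.image_of_continuousOn hBcont).bddAbove
    exact ⟨K, fun u hu => hK (Set.mem_image_of_mem _ hu)⟩
  -- Gronwall: g = 0 on Icc
  have hg0 : ∀ u ∈ Icc (0:ℝ) 1, g u = 0 := by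
    intro u hu
    have := norm_le_gronwallBound_of_norm_deriv_right_le (δ := 0) (K := K) (ε := 0)
      (f := g) (f' := fun u => g u * fderiv ℝ φ (X u) (-η₂ u, η₁ u))
      hgc
      (fun x hx => ((hgd x (Ico_subset_Icc_self hx)).hasDerivWithinAt))
      (by simp [hg_def, h0])
      (fun x hx => by
        have hx' := Ico_subset_Icc_self hx
        have h1 : ‖g x * fderiv ℝ φ (X x) (-η₂ x, η₁ x)‖
            ≤ ‖g x‖ * (‖fderiv ℝ φ (X x)‖ * ‖((-η₂ x, η₁ x) : ℝ × ℝ)‖) := by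
          rw [norm_mul]
          exact mul_le_mul_of_nonneg_left
            ((fderiv ℝ φ (X x)).le_opNorm _) (norm_nonneg _)
        calc ‖g x * fderiv ℝ φ (X x) (-η₂ x, η₁ x)‖
            ≤ ‖g x‖ * (‖fderiv ℝ φ (X x)‖ * ‖((-η₂ x, η₁ x) : ℝ × ℝ)‖) := h1
          _ ≤ ‖g x‖ * K := mul_le_mul_of_nonneg_left (hK x hx') (norm_nonneg _)
          _ = K * ‖g x‖ + 0 := by ring)
      u hu
    rw [gronwallBound_ε0_δ0] at this
    exact norm_le_zero_iff.mp this
  -- components are constant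
  have h1 : ∀ u ∈ Icc (0:ℝ) 1, (X u).1 = (X 0).1 := by
    apply constant_of_has_deriv_right_zero
    · exact (continuous_fst.comp_continuousOn hXc)
    · intro x hx
      have h := (hX1 x (Ico_subset_Icc_self hx)).hasDerivWithinAt (s := Ici x)
      rw [show -(φ (X x) * η₂ x) = 0 by rw [show φ (X x) = 0 from hg0 x (Ico_subset_Icc_self hx)]; ring] at h
      exact h
  have h2 : ∀ u ∈ Icc (0:ℝ) 1, (X u).2 = (X 0).2 := by
    apply constant_of_has_deriv_right_zero
    · exact (continuous_snd.comp_continuousOn hXc)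
    · intro x hx
      have h := (hX2 x (Ico_subset_Icc_self hx)).hasDerivWithinAt (s := Ici x)
      rw [show φ (X x) * η₁ x = 0 by rw [show φ (X x) = 0 from hg0 x (Ico_subset_Icc_self hx)]; ring] at h
      exact h
  intro u hu
  exact Prod.ext (h1 u hu) (h2 u hu)
end

section
/- The function h : V → ℝ defined by h(x,π) = φ(x_f(x,π))/φ(x) when φ(x) ≠ 0 and h(x,π) = 1 − π₂∂₁φ(x) + π₁∂₂φ(x) when φ(x) = 0, is continuous on V, where x_f(x,π) = (x¹ − φ(x)π₂, x² + φ(x)π₁) and V = {(x,π) ∈ U × ℝ² : x_f(x,π) ∈ U}. -/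
open Set

/-- The final point map `x_f(x,π) = (x¹ − φ(x)π₂, x² + φ(x)π₁)`. -/
noncomputable def xf (φ : ℝ × ℝ → ℝ) (x π : ℝ × ℝ) : ℝ × ℝ :=
  (x.1 - φ x * π.2, x.2 + φ x * π.1)

/-- The piecewise-defined function `h`. -/
noncomputable def hfun (φ : ℝ × ℝ → ℝ) (p : (ℝ × ℝ) × (ℝ × ℝ)) : ℝ :=
  if φ p.1 ≠ 0 then φ (xf φ p.1 p.2) / φ p.1
  else 1 - p.2.2 * pd1 φ p.1 + p.2.1 * pd2 φ p.1

/-- The function `h` is continuous on `V = {(x,π) : x ∈ U, x_f(x,π) ∈ U}`. -/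
theorem hfun_continuousOn (U : Set (ℝ × ℝ)) (hU : IsOpen U) (φ : ℝ × ℝ → ℝ)
    (hφ : ContDiffOn ℝ (⊤ : ℕ∞) φ U) :
    ContinuousOn (hfun φ)
      {p : (ℝ × ℝ) × (ℝ × ℝ) | p.1 ∈ U ∧ xf φ p.1 p.2 ∈ U} := by
  set V : Set ((ℝ × ℝ) × (ℝ × ℝ)) := {p | p.1 ∈ U ∧ xf φ p.1 p.2 ∈ U} with hVdef
  have hφc : ContinuousOn φ U := hφ.continuousOn
  have hdiffAt : ∀ x ∈ U, DifferentiableAt ℝ φ x := fun x hx =>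
    (hφ.differentiableOn (by simp)).differentiableAt (hU.mem_nhds hx)
  have hdc : ContinuousOn (fun x => fderiv ℝ φ x) U :=
    hφ.continuousOn_fderiv_of_isOpen hU (by simp)
  have hfstV : MapsTo (Prod.fst : (ℝ × ℝ) × (ℝ × ℝ) → ℝ × ℝ) V U := fun p hp => hp.1
  intro p₀ hp₀
  obtain ⟨hx₀U, hxfU⟩ := hp₀
  have hφfst : ContinuousWithinAt (fun p : (ℝ × ℝ) × (ℝ × ℝ) => φ p.1) V p₀ :=
    (hφc p₀.1 hx₀U).comp continuousWithinAt_fst hfstV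
  have hxfV : ContinuousWithinAt (fun p : (ℝ × ℝ) × (ℝ × ℝ) => xf φ p.1 p.2) V p₀ := by
    apply ContinuousWithinAt.prodMk
    · exact (continuous_fst.fst.continuousWithinAt).sub
        (hφfst.mul continuous_snd.snd.continuousWithinAt)
    · exact (continuous_fst.snd.continuousWithinAt).add
        (hφfst.mul continuous_snd.fst.continuousWithinAt)
  have hφxf : ContinuousWithinAt (fun p : (ℝ × ℝ) × (ℝ × ℝ) => φ (xf φ p.1 p.2)) V p₀ :=
    ContinuousWithinAt.comp (g := φ) (f := fun p : (ℝ × ℝ) × (ℝ × ℝ) => xf φ p.1 p.2)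
      (hφc _ hxfU) hxfV (fun p hp => hp.2)
  set G : (ℝ × ℝ) × (ℝ × ℝ) → ℝ :=
    fun p => 1 - p.2.2 * pd1 φ p.1 + p.2.1 * pd2 φ p.1 with hGdef
  have hfdV : ContinuousWithinAt (fun p : (ℝ × ℝ) × (ℝ × ℝ) => fderiv ℝ φ p.1) V p₀ :=
    (hdc p₀.1 hx₀U).comp continuousWithinAt_fst hfstV
  have hGc : ContinuousWithinAt G V p₀ := by
    have h1 : ContinuousWithinAt (fun p : (ℝ × ℝ) × (ℝ × ℝ) => pd1 φ p.1) V p₀ :=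
      ((ContinuousLinearMap.apply ℝ ℝ (((1 : ℝ), (0 : ℝ)) : ℝ × ℝ)).continuous.continuousAt).comp_continuousWithinAt hfdV
    have h2 : ContinuousWithinAt (fun p : (ℝ × ℝ) × (ℝ × ℝ) => pd2 φ p.1) V p₀ :=
      ((ContinuousLinearMap.apply ℝ ℝ (((0 : ℝ), (1 : ℝ)) : ℝ × ℝ)).continuous.continuousAt).comp_continuousWithinAt hfdV
    exact ((continuousWithinAt_const.sub
      (continuous_snd.snd.continuousWithinAt.mul h1)).add
      (continuous_snd.fst.continuousWithinAt.mul h2))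
  by_cases h0 : φ p₀.1 = 0
  · -- φ vanishes at p₀
    have hG0 : hfun φ p₀ = G p₀ := by simp [hfun, h0, hGdef]
    have hE : Filter.Tendsto (fun p => hfun φ p - G p) (nhdsWithin p₀ V) (nhds 0) := by
      rw [NormedAddCommGroup.tendsto_nhds_zero]
      intro ε hε
      set M : ℝ := ‖p₀.2‖ + 1 with hMdef
      have hM : 0 < M := by positivity
      have hMnorm : ‖p₀.2‖ < M := by simp [hMdef]
      clear_value M
      obtain ⟨r₁, hr₁, hball₁⟩ := Metric.isOpen_iff.1 hU p₀.1 hx₀U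
      have hcd : ContinuousAt (fun x => fderiv ℝ φ x) p₀.1 :=
        hdc.continuousAt (hU.mem_nhds hx₀U)
      obtain ⟨r₂, hr₂, hball₂⟩ := Metric.continuousAt_iff.1 hcd (ε / (4 * M)) (by positivity)
      set r : ℝ := min r₁ r₂ with hrdef
      have hr : 0 < r := lt_min hr₁ hr₂
      have hballU : Metric.ball p₀.1 r ⊆ U := fun z hz =>
        hball₁ (Metric.ball_subset_ball (min_le_left _ _) hz)
      have hballd : ∀ z ∈ Metric.ball p₀.1 r,
          ‖fderiv ℝ φ z - fderiv ℝ φ p₀.1‖ < ε / (4 * M) := by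
        intro z hz
        have := hball₂ (show dist z p₀.1 < r₂ from lt_of_lt_of_le hz (min_le_right _ _))
        rwa [dist_eq_norm] at this
      have hv : ∀ᶠ p in nhdsWithin p₀ V, ‖(p : (ℝ × ℝ) × (ℝ × ℝ)).2‖ < M := by
        have ht : Filter.Tendsto (fun p : (ℝ × ℝ) × (ℝ × ℝ) => ‖p.2‖)
            (nhdsWithin p₀ V) (nhds ‖p₀.2‖) :=
          (continuous_snd.norm.continuousWithinAt)
        exact ht.eventually_lt_const hMnorm
      have hnear : ∀ᶠ p in nhdsWithin p₀ V,
          (p : (ℝ × ℝ) × (ℝ × ℝ)).1 ∈ Metric.ball p₀.1 (r / 2) := by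
        have ht : Filter.Tendsto (Prod.fst : (ℝ × ℝ) × (ℝ × ℝ) → ℝ × ℝ)
            (nhdsWithin p₀ V) (nhds p₀.1) := continuousWithinAt_fst
        exact ht (Metric.ball_mem_nhds _ (by positivity))
      have hsmall : ∀ᶠ p in nhdsWithin p₀ V,
          |φ (p : (ℝ × ℝ) × (ℝ × ℝ)).1| < (r / 2) / M := by
        have ht : Filter.Tendsto (fun p : (ℝ × ℝ) × (ℝ × ℝ) => |φ p.1|)
            (nhdsWithin p₀ V) (nhds |φ p₀.1|) := hφfst.abs
        rw [h0, abs_zero] at ht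
        exact ht.eventually_lt_const (by positivity)
      filter_upwards [hv, hnear, hsmall] with p hpv hpnear hpsmall
      by_cases hz : φ p.1 = 0
      · simp [hfun, hz, hGdef, hε]
      · -- the MVT estimate
        set t : ℝ := φ p.1 with htdef
        set v : ℝ × ℝ := (-p.2.2, p.2.1) with hvdef
        have hnv : ‖v‖ = ‖p.2‖ := by
          simp [hvdef, Prod.norm_def, max_comm]
        have hyx : xf φ p.1 p.2 - p.1 = t • v := by
          rw [Prod.ext_iff]
          constructor <;> simp [xf, hvdef, htdef, Prod.fst_sub, Prod.snd_sub]
        have habs : 0 < |t| := abs_pos.2 hz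
        have hxball : p.1 ∈ Metric.ball p₀.1 r := by
          refine Metric.ball_subset_ball ?_ hpnear
          linarith
        have hdistyx : ‖xf φ p.1 p.2 - p.1‖ < r / 2 := by
          rw [hyx, norm_smul, Real.norm_eq_abs, hnv]
          have h1 : |t| * ‖p.2‖ ≤ |t| * M := by
            have := abs_nonneg t
            nlinarith
          have h2 : |t| * M < (r / 2) / M * M := by
            have := mul_lt_mul_of_pos_right hpsmall hM
            exact this
          calc |t| * ‖p.2‖ ≤ |t| * M := h1
            _ < (r / 2) / M * M := h2
            _ = r / 2 := div_mul_cancel₀ _ hM.ne'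
        have hyball : xf φ p.1 p.2 ∈ Metric.ball p₀.1 r := by
          rw [Metric.mem_ball] at hpnear ⊢
          calc dist (xf φ p.1 p.2) p₀.1 ≤ dist (xf φ p.1 p.2) p.1 + dist p.1 p₀.1 :=
                dist_triangle _ _ _
            _ < r / 2 + r / 2 := by
                rw [dist_eq_norm]
                exact add_lt_add hdistyx hpnear
            _ = r := by ring
        have hbound : ∀ z ∈ Metric.ball p₀.1 r,
            ‖fderiv ℝ φ z - fderiv ℝ φ p.1‖ ≤ ε / (2 * M) := by
          intro z hzb
          have h1 := hballd z hzb
          have h2 := hballd p.1 hxball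
          calc ‖fderiv ℝ φ z - fderiv ℝ φ p.1‖
              ≤ ‖fderiv ℝ φ z - fderiv ℝ φ p₀.1‖ + ‖fderiv ℝ φ p₀.1 - fderiv ℝ φ p.1‖ := by
                have := norm_sub_le_norm_sub_add_norm_sub (fderiv ℝ φ z) (fderiv ℝ φ p₀.1)
                  (fderiv ℝ φ p.1)
                exact this
            _ ≤ ε / (4 * M) + ε / (4 * M) := by
                rw [norm_sub_rev (fderiv ℝ φ p₀.1)]
                exact add_le_add h1.le h2.le
            _ = ε / (2 * M) := by
                rw [← add_div]
                rw [show ε + ε = 2 * ε by ring, show (4 : ℝ) * M = 2 * (2 * M) by ring,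
                  mul_div_mul_left _ _ (two_ne_zero)]
        have key := (convex_ball p₀.1 r).norm_image_sub_le_of_norm_fderiv_le'
          (fun z hzb => hdiffAt z (hballU hzb)) hbound hxball hyball
        rw [hyx, map_smul, smul_eq_mul] at key
        have hlin : (fderiv ℝ φ p.1) v = -p.2.2 * pd1 φ p.1 + p.2.1 * pd2 φ p.1 := by
          have hv' : v = (-p.2.2) • (((1 : ℝ), (0 : ℝ)) : ℝ × ℝ)
              + p.2.1 • (((0 : ℝ), (1 : ℝ)) : ℝ × ℝ) := by
            simp [hvdef, Prod.ext_iff]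
          rw [hv', map_add, map_smul, map_smul, smul_eq_mul, smul_eq_mul]
          rfl
        have heq : hfun φ p - G p
            = (φ (xf φ p.1 p.2) - φ p.1 - t * ((fderiv ℝ φ p.1) v)) / t := by
          rw [hfun, if_pos hz, hGdef, hlin]
          rw [← htdef]
          field_simp
          ring
        rw [heq, Real.norm_eq_abs, abs_div]
        have hnum : |φ (xf φ p.1 p.2) - φ p.1 - t * ((fderiv ℝ φ p.1) v)|
            ≤ ε / (2 * M) * (|t| * ‖v‖) := by
          have : ‖t • v‖ = |t| * ‖v‖ := by rw [norm_smul, Real.norm_eq_abs]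
          calc |φ (xf φ p.1 p.2) - φ p.1 - t * ((fderiv ℝ φ p.1) v)|
              = ‖φ (xf φ p.1 p.2) - φ p.1 - t * ((fderiv ℝ φ p.1) v)‖ := rfl
            _ ≤ ε / (2 * M) * ‖t • v‖ := key
            _ = ε / (2 * M) * (|t| * ‖v‖) := by rw [this]
        have hfinal : |φ (xf φ p.1 p.2) - φ p.1 - t * ((fderiv ℝ φ p.1) v)| / |t|
            ≤ ε / (2 * M) * ‖v‖ := by
          rw [div_le_iff₀ habs]
          calc |φ (xf φ p.1 p.2) - φ p.1 - t * ((fderiv ℝ φ p.1) v)|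
              ≤ ε / (2 * M) * (|t| * ‖v‖) := hnum
            _ = ε / (2 * M) * ‖v‖ * |t| := by ring
        calc |φ (xf φ p.1 p.2) - φ p.1 - t * ((fderiv ℝ φ p.1) v)| / |t|
            ≤ ε / (2 * M) * ‖v‖ := hfinal
          _ < ε := by
              rw [hnv]
              have hε2M : 0 < ε / (2 * M) := by positivity
              have := mul_lt_mul_of_pos_left hpv hε2M
              calc ε / (2 * M) * ‖p.2‖ < ε / (2 * M) * M := this
                _ = ε / 2 := by
                    rw [div_mul_eq_mul_div, mul_comm 2 M, ← div_div,
                      mul_div_assoc, div_self hM.ne', mul_one]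
                _ < ε := by linarith
    have := hGc.tendsto.add hE
    rw [add_zero] at this
    have h2 : Filter.Tendsto (hfun φ) (nhdsWithin p₀ V) (nhds (G p₀)) := by
      refine this.congr fun p => ?_
      ring
    rw [ContinuousWithinAt, hG0]
    exact h2
  · -- φ p₀.1 ≠ 0 : h is locally a quotient of continuous functions
    have heq : ∀ᶠ p in nhdsWithin p₀ V, hfun φ p = φ (xf φ p.1 p.2) / φ p.1 := by
      filter_upwards [hφfst.eventually_ne h0] with p hp
      rw [hfun, if_pos hp]
    exact ((hφxf.div hφfst h0).congr_of_eventuallyEq heq (by simp [hfun, h0]))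
end

section
/- For the semiclassical quantum plane, U = ℝ² with φ(x¹,x²) = x¹x², the function h equals h(x,π) = (1 − x²π₂)(1 + x¹π₁), and the connected component of {h > 0} containing ℝ² × {(0,0)} is exactly {(x¹,x²,π₁,π₂) ∈ ℝ⁴ : x¹π₁ > −1 and x²π₂ < 1}. -/
open Set

/-- The Poisson structure of the semiclassical quantum plane. -/
noncomputable def φqp : ℝ × ℝ → ℝ := fun x => x.1 * x.2

/-!
Away from `x¹x² = 0` the quotient `φ(x_f)/φ(x)` factors as `(1 − x²π₂)(1 + x¹π₁)`, and on
`x¹x² = 0` the derivative formula gives the same polynomial. Hence `{h > 0}` is the disjoint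
union of the open sets `{x¹π₁ > −1, x²π₂ < 1}` and `{x¹π₁ < −1, x²π₂ > 1}`. The first contains
`ℝ² × {0}` and, with every point `(x, π)`, the segment from `(x, 0)` to `(x, π)`; so it is
connected and is the component.
-/

theorem connectedComponentIn_union_eq_left {α : Type*} [TopologicalSpace α] {U V : Set α}
    (hU : IsOpen U) (hV : IsOpen V) (hUV : Disjoint U V) (hUc : IsPreconnected U) {x : α}
    (hx : x ∈ U) : connectedComponentIn (U ∪ V) x = U :=
  (isPreconnected_connectedComponentIn.subset_left_of_subset_union hU hV hUV
      (connectedComponentIn_subset _ _) ⟨x, mem_connectedComponentIn (Or.inl hx), hx⟩).antisymm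
    (hUc.subset_connectedComponentIn hx subset_union_left)

theorem isPreconnected_of_forall_smul_snd_mem {E F : Type*} [AddCommGroup E] [Module ℝ E]
    [TopologicalSpace E] [ContinuousAdd E] [ContinuousSMul ℝ E] [AddCommGroup F] [Module ℝ F]
    [TopologicalSpace F] [ContinuousAdd F] [ContinuousSMul ℝ F] {S : Set (E × F)}
    (hzero : ∀ y : E, (y, (0 : F)) ∈ S) (hsmul : ∀ p ∈ S, ∀ t ∈ Icc (0 : ℝ) 1, (p.1, t • p.2) ∈ S) :
    IsPreconnected S := by
  have hbase : IsPreconnected (univ ×ˢ {(0 : F)} : Set (E × F)) :=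
    ((convex_univ (𝕜 := ℝ)).prod (convex_singleton 0)).isPreconnected
  refine isPreconnected_of_forall 0 fun p hp => ?_
  let ray : ℝ → E × F := fun t => (p.1, t • p.2)
  have hray : IsPreconnected (ray '' Icc 0 1) :=
    isPreconnected_Icc.image ray (by fun_prop)
  refine ⟨univ ×ˢ {0} ∪ ray '' Icc 0 1, ?_, Or.inl (by simp), Or.inr ⟨1, by simp, by simp [ray]⟩,
    hbase.union (p.1, 0) (by simp) ⟨0, by simp, by simp [ray]⟩ hray⟩
  rintro ⟨y, z⟩ (⟨-, hz⟩ | ⟨t, ht, ht'⟩)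
  · obtain rfl : z = 0 := hz
    exact hzero y
  · exact ht' ▸ hsmul p hp t ht

theorem hasFDerivAt_φqp (x : ℝ × ℝ) :
    HasFDerivAt φqp (x.1 • ContinuousLinearMap.snd ℝ ℝ ℝ + x.2 • ContinuousLinearMap.fst ℝ ℝ ℝ)
      x :=
  hasFDerivAt_fst.mul hasFDerivAt_snd

theorem pd1_φqp (x : ℝ × ℝ) : pd1 φqp x = x.2 := by
  simp [pd1, (hasFDerivAt_φqp x).fderiv]

theorem pd2_φqp (x : ℝ × ℝ) : pd2 φqp x = x.1 := by
  simp [pd2, (hasFDerivAt_φqp x).fderiv]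

theorem hfun_φqp (p : (ℝ × ℝ) × (ℝ × ℝ)) :
    hfun φqp p = (1 - p.1.2 * p.2.2) * (1 + p.1.1 * p.2.1) := by
  obtain ⟨⟨a, b⟩, ⟨c, d⟩⟩ := p
  by_cases hab : a * b = 0
  · simp only [hfun, φqp, hab, ne_eq, not_true_eq_false, if_false, pd1_φqp, pd2_φqp]
    linear_combination c * d * hab
  · simp only [hfun, φqp, xf, hab, ne_eq, not_false_eq_true, if_true]
    rw [div_eq_iff hab]
    ring

theorem setOf_hfun_φqp_pos :
    {p : (ℝ × ℝ) × (ℝ × ℝ) | 0 < hfun φqp p} =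
      {p | p.1.1 * p.2.1 > -1 ∧ p.1.2 * p.2.2 < 1} ∪
        {p | p.1.1 * p.2.1 < -1 ∧ p.1.2 * p.2.2 > 1} := by
  ext p
  simp only [mem_ofPred_eq, mem_union, hfun_φqp, mul_pos_iff, sub_pos, sub_neg]
  constructor <;> rintro (⟨h₁, h₂⟩ | ⟨h₁, h₂⟩)
  exacts [.inl ⟨by linarith, h₁⟩, .inr ⟨by linarith, h₁⟩, .inl ⟨h₂, by linarith⟩,
    .inr ⟨h₂, by linarith⟩]

theorem isPreconnected_setOf_mul_gt_neg_one_and_mul_lt_one :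
    IsPreconnected {p : (ℝ × ℝ) × (ℝ × ℝ) | p.1.1 * p.2.1 > -1 ∧ p.1.2 * p.2.2 < 1} := by
  refine isPreconnected_of_forall_smul_snd_mem (fun y => by simp) ?_
  rintro ⟨⟨a, b⟩, ⟨c, d⟩⟩ ⟨h₁, h₂⟩ t ⟨ht₀, ht₁⟩
  simp only [Prod.smul_mk, smul_eq_mul, mem_ofPred_eq] at h₁ h₂ ⊢
  constructor
  · nlinarith [mul_nonneg ht₀ (neg_nonneg.2 (sub_nonpos.2 h₁.le)),
      mul_nonneg (sub_nonneg.2 ht₁) (sub_nonneg.2 h₁.le)]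
  · nlinarith [mul_nonneg ht₀ (sub_nonneg.2 h₂.le),
      mul_nonneg (sub_nonneg.2 ht₁) (sub_nonneg.2 h₂.le)]

/-- For the semiclassical quantum plane `φ(x¹,x²) = x¹x²`,
`h(x,π) = (1 − x²π₂)(1 + x¹π₁)`, and the connected component of `{h > 0}`
containing `ℝ² × {(0,0)}` is `{x¹π₁ > −1, x²π₂ < 1}`. -/
theorem quantum_plane :
    (∀ p : (ℝ × ℝ) × (ℝ × ℝ),
        hfun φqp p = (1 - p.1.2 * p.2.2) * (1 + p.1.1 * p.2.1)) ∧
    (∀ x : ℝ × ℝ,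
        connectedComponentIn {p : (ℝ × ℝ) × (ℝ × ℝ) | 0 < hfun φqp p}
            (x, ((0:ℝ), (0:ℝ)))
          = {p : (ℝ × ℝ) × (ℝ × ℝ) | p.1.1 * p.2.1 > -1 ∧ p.1.2 * p.2.2 < 1}) := by
  have hc₁ : Continuous fun p : (ℝ × ℝ) × (ℝ × ℝ) => p.1.1 * p.2.1 := by fun_prop
  have hc₂ : Continuous fun p : (ℝ × ℝ) × (ℝ × ℝ) => p.1.2 * p.2.2 := by fun_prop
  refine ⟨hfun_φqp, fun x => ?_⟩
  rw [setOf_hfun_φqp_pos]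
  exact connectedComponentIn_union_eq_left
    ((isOpen_lt continuous_const hc₁).inter (isOpen_lt hc₂ continuous_const))
    ((isOpen_lt hc₁ continuous_const).inter (isOpen_lt continuous_const hc₂))
    (disjoint_left.mpr fun p h₁ h₂ => lt_asymm (show -1 < p.1.1 * p.2.1 from h₁.1) h₂.1)
    isPreconnected_setOf_mul_gt_neg_one_and_mul_lt_one (by simp)
end

section
/- The groupoid product on G defined by (x,π) • (x̃,π̃) = (x, π + h(x,π)·π̃), whenever r(x,π) = l(x̃,π̃) (i.e. x̃ = x_f(x,π)), is associative: for composable triples, ((x,π)•(x̃,π̃))•(x̂,π̂) = (x,π)•((x̃,π̃)•(x̂,π̂)). This uses the cocycle identity h(x, π + h(x,π)π̃) = h(x,π)·h(x̃,π̃) when x̃ = x_f(x,π). -/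
open Set

/-- The groupoid product `(x,π) • (x̃,π̃) = (x, π + h(x,π)·π̃)`. -/
noncomputable def gprod (φ : ℝ × ℝ → ℝ) (g g' : (ℝ × ℝ) × (ℝ × ℝ)) :
    (ℝ × ℝ) × (ℝ × ℝ) :=
  (g.1, g.2 + hfun φ g • g'.2)

/-- Associativity of the groupoid product for composable triples. -/
theorem gprod_assoc (U : Set (ℝ × ℝ)) (hU : IsOpen U) (φ : ℝ × ℝ → ℝ)
    (hφ : ContDiffOn ℝ (⊤ : ℕ∞) φ U)
    (x π x' π' x'' π'' : ℝ × ℝ)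
    (hxU : x ∈ U) (hx'U : x' ∈ U) (hx''U : x'' ∈ U)
    (hcomp1 : x' = xf φ x π) (hcomp2 : x'' = xf φ x' π')
    (hφx : φ x ≠ 0) (hφx' : φ x' ≠ 0)
    (hpos : 0 < hfun φ (x, π)) (hpos' : 0 < hfun φ (x', π')) :
    gprod φ (gprod φ (x, π) (x', π')) (x'', π'')
      = gprod φ (x, π) (gprod φ (x', π') (x'', π'')) := by
  set c := hfun φ (x, π) with hc
  have h1 : c = φ x' / φ x := by
    simp [hc, hfun, hφx, hcomp1]
  have hxf : xf φ x (π + c • π') = xf φ x' π' := by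
    have hx'1 : x'.1 = x.1 - φ x * π.2 := by rw [hcomp1]; rfl
    have hx'2 : x'.2 = x.2 + φ x * π.1 := by rw [hcomp1]; rfl
    rw [h1]
    ext <;> simp [xf, hx'1, hx'2, Prod.smul_def, smul_eq_mul] <;>
      field_simp <;> ring
  have h2 : hfun φ (x, π + c • π') = c * hfun φ (x', π') := by
    simp only [hfun, ne_eq, hφx, not_false_eq_true, if_true, hφx', hxf]
    rw [h1]
    field_simp
  show ((x : ℝ × ℝ), (π + c • π') + hfun φ (x, π + c • π') • π'')
      = (x, π + c • (π' + hfun φ (x', π') • π''))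
  rw [h2, smul_add, mul_smul, add_assoc]
end

section
/- The cocycle identity for h: if x̃ = x_f(x,π) and φ(x) ≠ 0, φ(x̃) ≠ 0, then h(x, π + h(x,π)·π̃) = h(x,π)·h(x̃, π̃), and moreover x_f(x, π + h(x,π)π̃) = x_f(x̃, π̃). -/
open Set

/-- The cocycle identity for `h`:  if `x̃ = x_f(x,π)` with `φ(x) ≠ 0` and
`φ(x̃) ≠ 0`, then `h(x, π + h(x,π)π̃) = h(x,π)·h(x̃,π̃)` and
`x_f(x, π + h(x,π)π̃) = x_f(x̃,π̃)`. -/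
theorem hfun_cocycle (U : Set (ℝ × ℝ)) (hU : IsOpen U) (φ : ℝ × ℝ → ℝ)
    (hφ : ContDiffOn ℝ (⊤ : ℕ∞) φ U)
    (x π x' π' : ℝ × ℝ)
    (hxU : x ∈ U) (hx'U : x' ∈ U) (hx'fU : xf φ x' π' ∈ U)
    (hcomp : x' = xf φ x π)
    (hφx : φ x ≠ 0) (hφx' : φ x' ≠ 0) :
    hfun φ (x, π + hfun φ (x, π) • π') = hfun φ (x, π) * hfun φ (x', π') ∧
    xf φ x (π + hfun φ (x, π) • π') = xf φ x' π' := by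
  have h1 : hfun φ (x, π) = φ x' / φ x := by
    simp [hfun, hφx, hcomp]
  set v := π + hfun φ (x, π) • π' with hv
  have hxf : xf φ x (π + hfun φ (x, π) • π') = xf φ x' π' := by
    have hc1 : x'.1 = x.1 - φ x * π.2 := by rw [hcomp]; rfl
    have hc2 : x'.2 = x.2 + φ x * π.1 := by rw [hcomp]; rfl
    simp only [xf, h1, Prod.smul_def, Prod.fst_add, Prod.snd_add, smul_eq_mul,
      Prod.mk.injEq, hc1, hc2]
    constructor <;> field_simp <;> ring
  refine ⟨?_, hxf⟩
  have h2 : hfun φ (x, v) = φ (xf φ x' π') / φ x := by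
    simp only [hfun, hφx, ne_eq, not_false_iff, if_pos]
    rw [hxf]
  have h3 : hfun φ (x', π') = φ (xf φ x' π') / φ x' := by
    simp [hfun, hφx']
  rw [h2, h1, h3]
  field_simp
end
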